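/- arXiv:q-alg/9605021 — 5 statements merged into one kernel-verified Lean document; each statement's English description precedes it below -/
import Mathlib

section
/- For all indices 1 ≤ b, c ≤ 2n and every tuple (a_1, …, a_p) of indices in {1, …, 2n}: σ_{bc}[a_1 … a_p] − [a_1 … a_p]σ_{bc} = −Σ_{i=1}^p g_{b a_i} [a_1 … a_{i−1} c a_{i+1} … a_p] − Σ_{i=1}^p g_{c a_i} [a_1 … a_{i−1} b a_{i+1} … a_p], where σ_{bc} := σ_b σ_c + σ_c σ_b. In particular, Ω is stable under the adjoint action of every bosonic generator σ_{bc}. -/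
open scoped BigOperators TensorProduct
open Nat

noncomputable section

/-- The symplectic metric `g` of `osp(1|2n)` (0-indexed). -/
def gmat (n : ℕ) (a b : Fin (2*n)) : ℚ :=
  if (a:ℕ) < n ∧ (b:ℕ) = (a:ℕ) + n then -1
  else if (b:ℕ) < n ∧ (a:ℕ) = (b:ℕ) + n then 1
  else 0

/-- The defining relations of `U(osp(1|2n))`:
`(σₐσ_b + σ_bσₐ)σ_c - σ_c(σₐσ_b + σ_bσₐ) = -g_{ac} σ_b - g_{bc} σₐ`. -/
inductive OspRel (n : ℕ) : FreeAlgebra ℚ (Fin (2*n)) → FreeAlgebra ℚ (Fin (2*n)) → Prop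
  | rel (a b c : Fin (2*n)) : OspRel n
      ((FreeAlgebra.ι ℚ a * FreeAlgebra.ι ℚ b + FreeAlgebra.ι ℚ b * FreeAlgebra.ι ℚ a)
          * FreeAlgebra.ι ℚ c)
      (FreeAlgebra.ι ℚ c *
          (FreeAlgebra.ι ℚ a * FreeAlgebra.ι ℚ b + FreeAlgebra.ι ℚ b * FreeAlgebra.ι ℚ a)
        - algebraMap ℚ (FreeAlgebra ℚ (Fin (2*n))) (gmat n a c) * FreeAlgebra.ι ℚ b
        - algebraMap ℚ (FreeAlgebra ℚ (Fin (2*n))) (gmat n b c) * FreeAlgebra.ι ℚ a)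

/-- The universal enveloping superalgebra `U(osp(1|2n))`. -/
abbrev U (n : ℕ) := RingQuot (OspRel n)

/-- The fermionic generators `σₐ`. -/
def σ (n : ℕ) (a : Fin (2*n)) : U n :=
  RingQuot.mkAlgHom ℚ (OspRel n) (FreeAlgebra.ι ℚ a)

/-- The bosonic generators `σ_{ab} = σₐσ_b + σ_bσₐ`. -/
def σσ (n : ℕ) (a b : Fin (2*n)) : U n := σ n a * σ n b + σ n b * σ n a

/-- The antisymmetrized monomial `[a₁ … a_p]`. -/
def brkt (n : ℕ) (p : ℕ) (a : Fin p → Fin (2*n)) : U n :=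
  ∑ s : Equiv.Perm (Fin p),
    (Equiv.Perm.sign s : ℤ) • (List.ofFn fun i => σ n (a (s i))).prod

/-- `Ω`, the span of all the antisymmetrized monomials. -/
def Omega (n : ℕ) : Submodule ℚ (U n) :=
  Submodule.span ℚ {x | ∃ p, ∃ a : Fin p → Fin (2*n), x = brkt n p a}



/-
The adjoint action `⁅K, ·⁆` of any element of an associative algebra is a derivation, so it acts
on a product of `p` factors by the Leibniz rule, and hence also factor by factor on `[a₁ … a_p]`,
the alternatization of the product map evaluated at `(σ_{a₁}, …, σ_{a_p})`. For `K = σ_{bc}` the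
defining relations say that `⁅σ_{bc}, ·⁆` maps each `σ_a` to `-g_{ba} σ_c - g_{ca} σ_b`, and
multilinearity of `[a₁ … a_p]` in the `σ_{aᵢ}` turns this into the stated formula, whose right-hand
side visibly lies in `Ω`.
-/

attribute [local instance] LieRing.ofAssociativeRing

section Alternatization

variable {R A : Type*} [CommRing R] [Ring A] [Algebra R A]

theorem lie_list_ofFn_prod (K : A) {p : ℕ} (f : Fin p → A) :
    ⁅K, (List.ofFn f).prod⁆ = ∑ j, (List.ofFn (Function.update f j ⁅K, f j⁆)).prod := by
  induction f using Fin.consInduction with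
  | elim0 => simp [Ring.lie_def]
  | cons x f ih =>
    simp only [List.ofFn_cons, List.prod_cons, Fin.sum_univ_succ, Fin.cons_zero, Fin.cons_succ,
      Fin.update_cons_zero, ← Fin.cons_update, ← Finset.mul_sum, ← ih]
    simp only [Ring.lie_def]
    noncomm_ring

theorem alternatization_mkPiAlgebraFin_apply {p : ℕ} (v : Fin p → A) :
    (MultilinearMap.mkPiAlgebraFin R p A).alternatization v =
      ∑ s : Equiv.Perm (Fin p), Equiv.Perm.sign s • (List.ofFn (v ∘ s)).prod :=
  MultilinearMap.alternatization_apply _ _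

theorem lie_alternatization_mkPiAlgebraFin (K : A) {p : ℕ} (v : Fin p → A) :
    ⁅K, (MultilinearMap.mkPiAlgebraFin R p A).alternatization v⁆ =
      ∑ i, (MultilinearMap.mkPiAlgebraFin R p A).alternatization
        (Function.update v i ⁅K, v i⁆) := by
  simp only [alternatization_mkPiAlgebraFin_apply, lie_sum, Units.smul_def, lie_zsmul,
    lie_list_ofFn_prod]
  rw [Finset.sum_comm]
  refine Finset.sum_congr rfl fun s _ => ?_
  rw [Finset.smul_sum]
  conv_rhs => rw [← Equiv.sum_comp s]
  simp only [Function.update_comp_eq_of_injective _ s.injective, Function.comp_apply]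

end Alternatization

theorem lie_σσ_σ (n : ℕ) (b c a : Fin (2*n)) :
    ⁅σσ n b c, σ n a⁆ = -(gmat n b a • σ n c) - gmat n c a • σ n b := by
  have h := RingQuot.mkAlgHom_rel ℚ (OspRel.rel b c a)
  simp only [map_mul, map_add, map_sub, AlgHom.commutes] at h
  simp only [Ring.lie_def, σσ, σ, Algebra.smul_def]
  rw [h]
  abel

theorem brkt_eq_alternatization (n p : ℕ) (a : Fin p → Fin (2*n)) :
    brkt n p a = (MultilinearMap.mkPiAlgebraFin ℚ p (U n)).alternatization (σ n ∘ a) := by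
  rw [alternatization_mkPiAlgebraFin_apply]
  rfl

theorem lie_σσ_brkt (n : ℕ) (b c : Fin (2*n)) (p : ℕ) (a : Fin p → Fin (2*n)) :
    ⁅σσ n b c, brkt n p a⁆ =
      - ∑ i : Fin p, gmat n b (a i) • brkt n p (Function.update a i c)
      - ∑ i : Fin p, gmat n c (a i) • brkt n p (Function.update a i b) := by
  simp only [brkt_eq_alternatization, lie_alternatization_mkPiAlgebraFin, Function.comp_apply,
    lie_σσ_σ, AlternatingMap.map_update_sub, AlternatingMap.map_update_neg,
    AlternatingMap.map_update_smul, Function.comp_update, Finset.sum_sub_distrib,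
    Finset.sum_neg_distrib]

theorem lie_σσ_mem_Omega (n : ℕ) (b c : Fin (2*n)) {x : U n} (hx : x ∈ Omega n) :
    ⁅σσ n b c, x⁆ ∈ Omega n := by
  suffices Omega n ≤ (Omega n).comap (LieAlgebra.ad ℚ (U n) (σσ n b c)) from this hx
  refine Submodule.span_le.mpr ?_
  rintro _ ⟨p, a, rfl⟩
  rw [SetLike.mem_coe, Submodule.mem_comap, LieAlgebra.ad_apply, lie_σσ_brkt]
  have hbrkt (a' : Fin p → Fin (2*n)) : brkt n p a' ∈ Omega n :=
    Submodule.subset_span ⟨p, a', rfl⟩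
  exact sub_mem (neg_mem (sum_mem fun i _ => Submodule.smul_mem _ _ (hbrkt _)))
    (sum_mem fun i _ => Submodule.smul_mem _ _ (hbrkt _))

theorem stmt1_general (n : ℕ) :
    (∀ (b c : Fin (2*n)) (p : ℕ) (a : Fin p → Fin (2*n)),
      σσ n b c * brkt n p a - brkt n p a * σσ n b c =
        - ∑ i : Fin p, gmat n b (a i) • brkt n p (Function.update a i c)
        - ∑ i : Fin p, gmat n c (a i) • brkt n p (Function.update a i b)) ∧
    (∀ (b c : Fin (2*n)), ∀ x ∈ Omega n, σσ n b c * x - x * σσ n b c ∈ Omega n) :=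
  ⟨lie_σσ_brkt n, fun b c _ hx => lie_σσ_mem_Omega n b c hx⟩

/-- `σ_{bc}[a₁…a_p] − [a₁…a_p]σ_{bc}
  = −Σᵢ g_{b aᵢ} [a₁ … c … a_p] − Σᵢ g_{c aᵢ} [a₁ … b … a_p]`
(`c`, resp. `b`, replacing `aᵢ`); in particular `Ω` is stable under the adjoint action of
every bosonic generator `σ_{bc}`. -/
theorem stmt1 (n : ℕ) (hn : 1 ≤ n) :
    (∀ (b c : Fin (2*n)) (p : ℕ) (a : Fin p → Fin (2*n)),
      σσ n b c * brkt n p a - brkt n p a * σσ n b c =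
        - ∑ i : Fin p, gmat n b (a i) • brkt n p (Function.update a i c)
        - ∑ i : Fin p, gmat n c (a i) • brkt n p (Function.update a i b)) ∧
    (∀ (b c : Fin (2*n)), ∀ x ∈ Omega n, σσ n b c * x - x * σσ n b c ∈ Omega n) :=
  stmt1_general n

end
end

section
/- Let 1 ≤ a ≤ 2n and let ā denote its conjugate index (ā = a + n if a ≤ n, ā = a − n if a > n). If (a_1, …, a_p) is a tuple of indices in {1, …, 2n} such that a occurs among a_1, …, a_p but ā does not, then σ_a [a_1 … a_p] + (−1)^p [a_1 … a_p] σ_a = 0. -/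
open scoped BigOperators TensorProduct
open Nat

noncomputable section

/-- The conjugate index `ā` : `ā = a + n` if `a ≤ n`, `ā = a − n` if `a > n` (0-indexed). -/
def conjIdx (n : ℕ) (a : Fin (2*n)) : Fin (2*n) :=
  if _h : (a:ℕ) < n then ⟨(a:ℕ) + n, by have := a.isLt; omega⟩
  else ⟨(a:ℕ) - n, by have := a.isLt; omega⟩

namespace OspAux

variable {n : ℕ}

lemma gmat_self (a : Fin (2*n)) : gmat n a a = 0 := by
  have h : ¬((a:ℕ) < n ∧ n = 0) := by omega
  simp [gmat, h]

lemma gmat_left_eq_zero {a b : Fin (2*n)} (h : b ≠ conjIdx n a) : gmat n a b = 0 := by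
  have h' : (b:ℕ) ≠ ((conjIdx n a : Fin (2*n)) : ℕ) := fun hh => h (Fin.ext hh)
  have ha := a.isLt
  unfold conjIdx at h'
  unfold gmat
  by_cases hal : (a:ℕ) < n
  · rw [dif_pos hal] at h'
    simp only at h'
    split_ifs with h1 h2
    · exfalso; exact h' (by omega)
    · exfalso; omega
    · rfl
  · rw [dif_neg hal] at h'
    simp only at h'
    split_ifs with h1 h2
    · exfalso; omega
    · exfalso; exact h' (by omega)
    · rfl

lemma gmat_right_eq_zero {a b : Fin (2*n)} (h : b ≠ conjIdx n a) : gmat n b a = 0 := by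
  have h' : (b:ℕ) ≠ ((conjIdx n a : Fin (2*n)) : ℕ) := fun hh => h (Fin.ext hh)
  have ha := a.isLt
  unfold conjIdx at h'
  unfold gmat
  by_cases hal : (a:ℕ) < n
  · rw [dif_pos hal] at h'
    simp only at h'
    split_ifs with h1 h2
    · exfalso; omega
    · exfalso; exact h' (by omega)
    · rfl
  · rw [dif_neg hal] at h'
    simp only at h'
    split_ifs with h1 h2
    · exfalso; exact h' (by omega)
    · exfalso; omega
    · rfl

lemma sigma_rel (a b c : Fin (2*n)) :
    σσ n a b * σ n c
      = σ n c * σσ n a b - gmat n a c • σ n b - gmat n b c • σ n a := by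
  have h := RingQuot.mkAlgHom_rel ℚ (OspRel.rel a b c)
  simp only [map_mul, map_add, map_sub, AlgHom.commutes] at h
  simpa [σ, σσ, Algebra.smul_def] using h

def wp (n m : ℕ) (F : Fin m → Fin (2*n)) : U n := (List.ofFn fun i => σ n (F i)).prod

lemma wp_zero (F : Fin 0 → Fin (2*n)) : wp n 0 F = 1 := by simp [wp]

lemma wp_succ {m : ℕ} (F : Fin (m+1) → Fin (2*n)) :
    wp n (m+1) F = σ n (F 0) * wp n m (fun i => F i.succ) := by
  simp [wp, List.ofFn_succ]

lemma wp_succ' {m : ℕ} (F : Fin (m+1) → Fin (2*n)) :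
    wp n (m+1) F = wp n m (fun i => F i.castSucc) * σ n (F (Fin.last m)) := by
  rw [wp, List.ofFn_succ', List.prod_concat]; rfl


lemma brkt_eq_q (p : ℕ) (f : Fin p → Fin (2*n)) :
    brkt n p f = ∑ s : Equiv.Perm (Fin p),
      (((Equiv.Perm.sign s : ℤ) : ℚ)) • wp n p (f ∘ s) :=
  Finset.sum_congr rfl fun s _ => (Int.cast_smul_eq_zsmul ℚ _ _).symm

lemma ssigma_mul_wp (a c : Fin (2*n)) (m : ℕ) (F : Fin m → Fin (2*n))
    (ha : ∀ i, gmat n a (F i) = 0) :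
    σσ n a c * wp n m F
      = wp n m F * σσ n a c
        - ∑ j, gmat n c (F j) • wp n m (Function.update F j a) := by
  induction m with
  | zero => simp [wp_zero]
  | succ m ih =>
    have h0 : wp n (m+1) (Function.update F 0 a)
        = σ n a * wp n m (fun i => F i.succ) := by
      rw [wp_succ, Function.update_self]
      have he : (fun i : Fin m => Function.update F 0 a i.succ) = fun i => F i.succ := by
        funext i; rw [Function.update_of_ne (Fin.succ_ne_zero i)]
      rw [he]
    have hsucc : ∀ j : Fin m, wp n (m+1) (Function.update F j.succ a)
        = σ n (F 0) * wp n m (Function.update (fun i => F i.succ) j a) := by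
      intro j
      rw [wp_succ, Function.update_of_ne (Fin.succ_ne_zero j).symm]
      have he : (fun i : Fin m => Function.update F j.succ a i.succ)
          = Function.update (fun i => F i.succ) j a := by
        funext i
        by_cases hij : i = j
        · subst hij; rw [Function.update_self, Function.update_self]
        · rw [Function.update_of_ne (fun hh => hij (Fin.succ_injective _ hh)),
            Function.update_of_ne hij]
      rw [he]
    rw [wp_succ, ← mul_assoc, sigma_rel a c (F 0), ha 0]
    rw [zero_smul, sub_zero, sub_mul, mul_assoc,
      ih (fun i => F i.succ) (fun i => ha i.succ)]
    rw [Fin.sum_univ_succ, h0]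
    simp only [hsucc]
    rw [mul_sub, Finset.mul_sum]
    simp only [mul_smul_comm, smul_mul_assoc]
    rw [← mul_assoc]
    abel

lemma ssigma_mul_brkt (a c : Fin (2*n)) (m : ℕ) (h : Fin m → Fin (2*n))
    (ha : ∀ i, gmat n a (h i) = 0) :
    σσ n a c * brkt n m h
      = brkt n m h * σσ n a c
        - ∑ i, gmat n c (h i) • brkt n m (Function.update h i a) := by
  rw [brkt_eq_q, Finset.mul_sum, Finset.sum_mul]
  have key : ∀ s : Equiv.Perm (Fin m),
      σσ n a c * ((((Equiv.Perm.sign s : ℤ) : ℚ)) • wp n m (h ∘ s))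
        = (((Equiv.Perm.sign s : ℤ) : ℚ)) • wp n m (h ∘ s) * σσ n a c
          - ∑ i, gmat n c (h i) •
              ((((Equiv.Perm.sign s : ℤ) : ℚ)) • wp n m ((Function.update h i a) ∘ s)) := by
    intro s
    rw [mul_smul_comm, smul_mul_assoc,
      ssigma_mul_wp a c m (h ∘ s) (fun i => ha (s i)), smul_sub]
    congr 1
    rw [Finset.smul_sum]
    rw [← Equiv.sum_comp (s : Equiv.Perm (Fin m))
      (fun i => gmat n c (h i) • ((((Equiv.Perm.sign s : ℤ) : ℚ)) • wp n m ((Function.update h i a) ∘ s)))]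
    refine Finset.sum_congr rfl fun j _ => ?_
    rw [smul_comm]
    congr 3
    funext l
    simp only [Function.comp_apply, Function.update]
    by_cases hlj : l = j
    · subst hlj; simp
    · have : ¬ (s l = s j) := fun hh => hlj (s.injective hh)
      simp [hlj, this]
  calc ∑ s : Equiv.Perm (Fin m),
        σσ n a c * ((((Equiv.Perm.sign s : ℤ) : ℚ)) • wp n m (h ∘ s))
      = ∑ s : Equiv.Perm (Fin m),
          ((((Equiv.Perm.sign s : ℤ) : ℚ)) • wp n m (h ∘ s) * σσ n a c
            - ∑ i, gmat n c (h i) •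
                ((((Equiv.Perm.sign s : ℤ) : ℚ)) • wp n m ((Function.update h i a) ∘ s))) :=
        Finset.sum_congr rfl fun s _ => key s
    _ = _ := by
        rw [Finset.sum_sub_distrib]
        congr 1
        rw [Finset.sum_comm]
        refine Finset.sum_congr rfl fun i _ => ?_
        rw [← Finset.smul_sum, brkt_eq_q]

lemma brkt_comp_perm (p : ℕ) (f : Fin p → Fin (2*n)) (e : Equiv.Perm (Fin p)) :
    brkt n p (f ∘ e) = (((Equiv.Perm.sign e : ℤ) : ℚ)) • brkt n p f := by
  have hsq : (((Equiv.Perm.sign e : ℤ) : ℚ)) * (((Equiv.Perm.sign e : ℤ) : ℚ)) = 1 := by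
    rcases Int.units_eq_one_or (Equiv.Perm.sign e) with h | h <;> rw [h] <;> norm_num
  rw [brkt_eq_q, brkt_eq_q, Finset.smul_sum]
  refine Fintype.sum_equiv (Equiv.mulLeft e) _ _ fun s => ?_
  have hsign : (((Equiv.Perm.sign (e * s) : ℤ) : ℚ))
      = (((Equiv.Perm.sign e : ℤ) : ℚ)) * (((Equiv.Perm.sign s : ℤ) : ℚ)) := by
    rw [map_mul]; push_cast; ring
  simp only [Equiv.coe_mulLeft]
  rw [smul_smul, hsign, ← mul_assoc, hsq, one_mul]
  rfl

lemma brkt_dup {p : ℕ} {f : Fin p → Fin (2*n)} {i j : Fin p} (hij : i ≠ j)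
    (hf : f i = f j) : brkt n p f = 0 := by
  have he : f ∘ (Equiv.swap i j) = f := by
    funext l
    simp only [Function.comp_apply, Equiv.swap_apply_def]
    split_ifs with h1 h2
    · rw [h1, hf]
    · rw [h2, hf]
    · rfl
  have h := brkt_comp_perm p f (Equiv.swap i j)
  rw [he, Equiv.Perm.sign_swap hij] at h
  have h2 : (2:ℚ) • brkt n p f = 0 := by
    rw [two_smul]
    have hc : ((((-1 : ℤˣ) : ℤ)) : ℚ) = -1 := by norm_num
    rw [hc] at h
    nth_rewrite 1 [h]
    module
  calc brkt n p f = (2⁻¹:ℚ) • ((2:ℚ) • brkt n p f) := by rw [smul_smul]; norm_num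
    _ = 0 := by rw [h2, smul_zero]

lemma brkt_zero_fn (f : Fin 0 → Fin (2*n)) : brkt n 0 f = 1 := by
  rw [brkt]
  rw [Fintype.sum_subsingleton _ (1 : Equiv.Perm (Fin 0))]
  simp


/-! ### Laplace expansions -/

def lphi (m : ℕ) : Fin (m+1) × Equiv.Perm (Fin m) → Equiv.Perm (Fin (m+1)) :=
  fun x => (x.1.cycleRange.symm : Equiv.Perm (Fin (m+1))) * Equiv.Perm.decomposeFin.symm (0, x.2)

lemma lphi_zero {m : ℕ} (j : Fin (m+1)) (e : Equiv.Perm (Fin m)) : lphi m (j, e) 0 = j := by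
  simp [lphi, Equiv.Perm.mul_apply, Equiv.Perm.decomposeFin_symm_apply_zero,
    Fin.cycleRange_symm_zero]

lemma lphi_succ {m : ℕ} (j : Fin (m+1)) (e : Equiv.Perm (Fin m)) (i : Fin m) :
    lphi m (j, e) i.succ = j.succAbove (e i) := by
  simp [lphi, Equiv.Perm.mul_apply, Equiv.Perm.decomposeFin_symm_apply_succ, Equiv.swap_self,
    Fin.cycleRange_symm_succ]

lemma lphi_bijective {m : ℕ} : Function.Bijective (lphi m) := by
  rw [Fintype.bijective_iff_injective_and_card]
  constructor
  · rintro ⟨j, e⟩ ⟨j', e'⟩ hEq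
    have h0 : j = j' := by
      have := congrArg (fun s : Equiv.Perm (Fin (m+1)) => s 0) hEq
      simpa only [lphi_zero] using this
    subst h0
    simp only [lphi] at hEq
    have h1 := mul_left_cancel hEq
    have h2 := Equiv.Perm.decomposeFin.symm.injective h1
    simp only [Prod.mk.injEq] at h2
    exact Prod.ext rfl h2.2
  · simp [Fintype.card_prod, Fintype.card_perm, Fintype.card_fin, Nat.factorial_succ]

lemma lphi_sign {m : ℕ} (j : Fin (m+1)) (e : Equiv.Perm (Fin m)) :
    (((Equiv.Perm.sign (lphi m (j, e)) : ℤ)) : ℚ)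
      = (-1:ℚ)^(j:ℕ) * (((Equiv.Perm.sign e : ℤ)) : ℚ) := by
  simp only [lphi]
  rw [map_mul]
  rw [Equiv.Perm.sign_symm, Fin.sign_cycleRange, Equiv.Perm.decomposeFin.symm_sign]
  simp only [if_pos rfl, one_mul]
  push_cast
  ring

def rpsi (m : ℕ) : Fin (m+1) × Equiv.Perm (Fin m) → Equiv.Perm (Fin (m+1)) :=
  fun x => Fin.revPerm * lphi m (x.1.rev, Fin.revPerm * x.2 * Fin.revPerm) * Fin.revPerm

lemma revPerm_mul_self (M : ℕ) : (Fin.revPerm : Equiv.Perm (Fin M)) * Fin.revPerm = 1 := by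
  ext x
  simp [Equiv.Perm.mul_apply, Fin.rev_rev]

lemma revPerm_mul_mul (M : ℕ) (s : Equiv.Perm (Fin M)) :
    Fin.revPerm * (Fin.revPerm * s) = s := by
  rw [← mul_assoc, revPerm_mul_self, one_mul]

lemma rev_conj_involutive (M : ℕ) :
    Function.Involutive (fun s : Equiv.Perm (Fin M) => Fin.revPerm * s * Fin.revPerm) := by
  intro s
  simp only [mul_assoc]
  rw [revPerm_mul_mul, revPerm_mul_self, mul_one]

lemma rpsi_bijective {m : ℕ} : Function.Bijective (rpsi m) := by
  have h1 : Function.Bijective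
      (fun x : Fin (m+1) × Equiv.Perm (Fin m) =>
        (x.1.rev, Fin.revPerm * x.2 * Fin.revPerm)) := by
    have : Function.Involutive
        (fun x : Fin (m+1) × Equiv.Perm (Fin m) =>
          (x.1.rev, Fin.revPerm * x.2 * Fin.revPerm)) := by
      rintro ⟨j, e⟩
      simp only [Prod.mk.injEq]
      exact ⟨Fin.rev_rev j, rev_conj_involutive m e⟩
    exact this.bijective
  have h2 : Function.Bijective
      (fun s : Equiv.Perm (Fin (m+1)) => Fin.revPerm * s * Fin.revPerm) :=
    (rev_conj_involutive (m+1)).bijective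
  exact h2.comp (lphi_bijective.comp h1)

lemma rpsi_last {m : ℕ} (j : Fin (m+1)) (e : Equiv.Perm (Fin m)) :
    rpsi m (j, e) (Fin.last m) = j := by
  simp only [rpsi, Equiv.Perm.mul_apply]
  rw [show (Fin.revPerm (Fin.last m) : Fin (m+1)) = 0 from by simp [Fin.rev_last]]
  rw [lphi_zero]
  simp [Fin.rev_rev]

lemma rpsi_castSucc {m : ℕ} (j : Fin (m+1)) (e : Equiv.Perm (Fin m)) (i : Fin m) :
    rpsi m (j, e) i.castSucc = j.succAbove (e i) := by
  simp only [rpsi, Equiv.Perm.mul_apply]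
  rw [show (Fin.revPerm i.castSucc : Fin (m+1)) = (i.rev).succ from by
    simp [Fin.rev_castSucc]]
  rw [lphi_succ]
  simp only [Equiv.Perm.mul_apply]
  rw [show (Fin.revPerm (i.rev) : Fin m) = i from by simp [Fin.rev_rev]]
  show Fin.rev (Fin.succAbove j.rev (Fin.rev (e i))) = _
  rw [Fin.rev_succAbove, Fin.rev_rev, Fin.rev_rev]

lemma rpsi_sign {m : ℕ} (j : Fin (m+1)) (e : Equiv.Perm (Fin m)) :
    (((Equiv.Perm.sign (rpsi m (j, e)) : ℤ)) : ℚ)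
      = (-1:ℚ)^(m - (j:ℕ)) * (((Equiv.Perm.sign e : ℤ)) : ℚ) := by
  have hval : ((j.rev : Fin (m+1)) : ℕ) = m - (j:ℕ) := by
    rw [Fin.val_rev]; omega
  have hconj : Equiv.Perm.sign (Fin.revPerm * e * Fin.revPerm) = Equiv.Perm.sign e := by
    rw [map_mul, map_mul]
    rcases Int.units_eq_one_or (Equiv.Perm.sign (Fin.revPerm : Equiv.Perm (Fin m))) with h | h <;>
      rcases Int.units_eq_one_or (Equiv.Perm.sign e) with h' | h' <;>
      rw [h, h'] <;> norm_num
  simp only [rpsi]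
  rw [map_mul, map_mul]
  have hsq : ∀ u v : ℤˣ, u * v * u = v := by
    intro u v
    rcases Int.units_eq_one_or u with h | h <;> rcases Int.units_eq_one_or v with h' | h' <;>
      rw [h, h'] <;> norm_num
  rw [hsq, lphi_sign, hconj, hval]


lemma laplace_left (m : ℕ) (h : Fin (m+1) → Fin (2*n)) :
    brkt n (m+1) h = ∑ j : Fin (m+1), ((-1:ℚ)^(j:ℕ)) •
      (σ n (h j) * brkt n m (h ∘ j.succAbove)) := by
  have lhs_eq : ∑ s : Equiv.Perm (Fin (m+1)),
        (((Equiv.Perm.sign s : ℤ)) : ℚ) • wp n (m+1) (h ∘ s)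
      = ∑ x : Fin (m+1) × Equiv.Perm (Fin m),
          (((Equiv.Perm.sign (lphi m x) : ℤ)) : ℚ) • wp n (m+1) (h ∘ lphi m x) :=
    (Fintype.sum_bijective (lphi m) lphi_bijective _ _ (fun _ => rfl)).symm
  rw [brkt_eq_q, lhs_eq, Fintype.sum_prod_type]
  refine Finset.sum_congr rfl fun j _ => ?_
  rw [brkt_eq_q, Finset.mul_sum, Finset.smul_sum]
  refine Finset.sum_congr rfl fun e _ => ?_
  have hword : wp n (m+1) (h ∘ lphi m (j, e))
      = σ n (h j) * wp n m ((h ∘ j.succAbove) ∘ e) := by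
    rw [wp_succ]
    have h0 : (h ∘ lphi m (j, e)) 0 = h j := by
      simp only [Function.comp_apply, lphi_zero]
    have hs : (fun i : Fin m => (h ∘ lphi m (j, e)) i.succ) = (h ∘ j.succAbove) ∘ e := by
      funext i
      simp only [Function.comp_apply, lphi_succ]
    rw [h0, hs]
  rw [hword, lphi_sign, mul_smul, mul_smul_comm]

lemma laplace_right (m : ℕ) (h : Fin (m+1) → Fin (2*n)) :
    brkt n (m+1) h = ∑ j : Fin (m+1), ((-1:ℚ)^(m - (j:ℕ))) •
      (brkt n m (h ∘ j.succAbove) * σ n (h j)) := by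
  have lhs_eq : ∑ s : Equiv.Perm (Fin (m+1)),
        (((Equiv.Perm.sign s : ℤ)) : ℚ) • wp n (m+1) (h ∘ s)
      = ∑ x : Fin (m+1) × Equiv.Perm (Fin m),
          (((Equiv.Perm.sign (rpsi m x) : ℤ)) : ℚ) • wp n (m+1) (h ∘ rpsi m x) :=
    (Fintype.sum_bijective (rpsi m) rpsi_bijective _ _ (fun _ => rfl)).symm
  rw [brkt_eq_q, lhs_eq, Fintype.sum_prod_type]
  refine Finset.sum_congr rfl fun j _ => ?_
  rw [brkt_eq_q, Finset.sum_mul, Finset.smul_sum]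
  refine Finset.sum_congr rfl fun e _ => ?_
  have hword : wp n (m+1) (h ∘ rpsi m (j, e))
      = wp n m ((h ∘ j.succAbove) ∘ e) * σ n (h j) := by
    rw [wp_succ']
    have h0 : (h ∘ rpsi m (j, e)) (Fin.last m) = h j := by
      simp only [Function.comp_apply, rpsi_last]
    have hs : (fun i : Fin m => (h ∘ rpsi m (j, e)) i.castSucc) = (h ∘ j.succAbove) ∘ e := by
      funext i
      simp only [Function.comp_apply, rpsi_castSucc]
    rw [h0, hs]
  rw [hword, rpsi_sign, mul_smul, smul_mul_assoc]

lemma brkt_one (f : Fin 1 → Fin (2*n)) : brkt n 1 f = σ n (f 0) := by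
  rw [laplace_left 0 f]
  rw [Fin.sum_univ_one]
  rw [brkt_zero_fn]
  simp


lemma sigma_mul_sigma (a d : Fin (2*n)) :
    σ n a * σ n d = σσ n a d - σ n d * σ n a :=
  (add_sub_cancel_right _ _).symm

lemma star (a : Fin (2*n)) : ∀ (q : ℕ) (g : Fin q → Fin (2*n)),
    (∀ i, g i ≠ conjIdx n a) →
    σ n a * brkt n (q+1) (Fin.cons a g)
      = ((-1:ℚ)^q) • (brkt n (q+1) (Fin.cons a g) * σ n a) := by
  intro q
  induction q with
  | zero =>
    intro g _
    rw [brkt_one]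
    simp only [Fin.cons_zero, pow_zero, one_smul]
  | succ q IH =>
    intro g hg
    have hc0 : Fin.cons a g ∘ (0 : Fin (q+2)).succAbove = g := by
      funext x
      simp [Fin.succAbove_zero, Fin.cons_succ]
    have hcS : ∀ i : Fin (q+1),
        Fin.cons a g ∘ (Fin.succ i).succAbove = Fin.cons a (g ∘ i.succAbove) := by
      intro i
      funext x
      refine Fin.cases ?_ (fun l => ?_) x
      · simp [Fin.succ_succAbove_zero]
      · simp [Fin.succ_succAbove_succ, Fin.cons_succ]
    have hL : brkt n (q+2) (Fin.cons a g)
        = σ n a * brkt n (q+1) g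
          + ∑ i : Fin (q+1), ((-1:ℚ)^((i:ℕ)+1)) •
              (σ n (g i) * brkt n (q+1) (Fin.cons a (g ∘ i.succAbove))) := by
      rw [laplace_left (q+1) (Fin.cons a g), Fin.sum_univ_succ]
      refine congrArg₂ (· + ·) ?_ (Finset.sum_congr rfl fun i _ => ?_)
      · rw [hc0, Fin.cons_zero, Fin.val_zero, pow_zero, one_smul]
      · rw [hcS i, Fin.cons_succ, Fin.val_succ]
    have hR : brkt n (q+2) (Fin.cons a g)
        = ((-1:ℚ)^(q+1)) • (brkt n (q+1) g * σ n a)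
          + ∑ i : Fin (q+1), ((-1:ℚ)^(q - (i:ℕ))) •
              (brkt n (q+1) (Fin.cons a (g ∘ i.succAbove)) * σ n (g i)) := by
      rw [laplace_right (q+1) (Fin.cons a g), Fin.sum_univ_succ]
      refine congrArg₂ (· + ·) ?_ (Finset.sum_congr rfl fun i _ => ?_)
      · rw [hc0, Fin.cons_zero, Fin.val_zero, Nat.sub_zero]
      · rw [hcS i, Fin.cons_succ, Fin.val_succ, Nat.add_sub_add_right]
    have hIH : ∀ i : Fin (q+1),
        σ n a * brkt n (q+1) (Fin.cons a (g ∘ i.succAbove))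
          = ((-1:ℚ)^q) • (brkt n (q+1) (Fin.cons a (g ∘ i.succAbove)) * σ n a) :=
      fun i => IH (g ∘ i.succAbove) (fun l => hg _)
    have hBK : ∀ i : Fin (q+1),
        σσ n a (g i) * brkt n (q+1) (Fin.cons a (g ∘ i.succAbove))
          = brkt n (q+1) (Fin.cons a (g ∘ i.succAbove)) * σσ n a (g i) := by
      intro i
      have hzero : ∀ j : Fin (q+1), gmat n a ((Fin.cons a (g ∘ i.succAbove) : Fin (q+1) → Fin (2*n)) j) = 0 := by
        intro j
        rcases Fin.eq_zero_or_eq_succ j with rfl | ⟨l, rfl⟩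
        · simpa [Fin.cons_zero] using gmat_self a
        · rw [Fin.cons_succ]; exact gmat_left_eq_zero (hg _)
      have h := ssigma_mul_brkt a (g i) (q+1) (Fin.cons a (g ∘ i.succAbove)) hzero
      have hsum : ∑ j : Fin (q+1), gmat n (g i) ((Fin.cons a (g ∘ i.succAbove) : Fin (q+1) → Fin (2*n)) j) •
          brkt n (q+1) (Function.update (Fin.cons a (g ∘ i.succAbove)) j a) = 0 := by
        refine Finset.sum_eq_zero fun j _ => ?_
        rcases Fin.eq_zero_or_eq_succ j with rfl | ⟨l, rfl⟩
        · rw [Fin.cons_zero, gmat_right_eq_zero (hg i), zero_smul]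
        · have hdup : brkt n (q+1)
              (Function.update (Fin.cons a (g ∘ i.succAbove)) l.succ a) = 0 := by
            refine brkt_dup (i := (0 : Fin (q+1))) (j := l.succ) (Fin.succ_ne_zero l).symm ?_
            rw [Function.update_of_ne (Fin.succ_ne_zero l).symm, Fin.cons_zero,
              Function.update_self]
          rw [hdup, smul_zero]
      rw [hsum, sub_zero] at h
      exact h
    have hcomm0 : σ n a * (σ n a * brkt n (q+1) g)
        = brkt n (q+1) g * (σ n a * σ n a) := by
      have h := ssigma_mul_brkt a a (q+1) g (fun i => gmat_left_eq_zero (hg i))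
      have hsum : ∑ i : Fin (q+1), gmat n a (g i) • brkt n (q+1) (Function.update g i a) = 0 :=
        Finset.sum_eq_zero fun i _ => by rw [gmat_left_eq_zero (hg i), zero_smul]
      rw [hsum, sub_zero] at h
      have h2 : σ n a * σ n a * brkt n (q+1) g + σ n a * σ n a * brkt n (q+1) g
          = brkt n (q+1) g * (σ n a * σ n a) + brkt n (q+1) g * (σ n a * σ n a) := by
        have h' : (σ n a * σ n a + σ n a * σ n a) * brkt n (q+1) g
            = brkt n (q+1) g * (σ n a * σ n a + σ n a * σ n a) := h
        rw [add_mul, mul_add] at h'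
        exact h'
      have h3 : (2:ℚ) • (σ n a * σ n a * brkt n (q+1) g)
          = (2:ℚ) • (brkt n (q+1) g * (σ n a * σ n a)) := by
        rw [two_smul, two_smul]; exact h2
      have h4 := congrArg (fun z => (2⁻¹:ℚ) • z) h3
      simp only [smul_smul] at h4
      norm_num at h4
      rw [← mul_assoc]
      exact h4
    -- E1
    have eqI : σ n a * brkt n (q+2) (Fin.cons a g)
        = σ n a * (σ n a * brkt n (q+1) g)
          + (∑ i : Fin (q+1), ((-1:ℚ)^((i:ℕ)+1)) •
              (σσ n a (g i) * brkt n (q+1) (Fin.cons a (g ∘ i.succAbove))))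
          + ((-1:ℚ)^q) • (σ n a * (brkt n (q+1) g * σ n a))
          - ((-1:ℚ)^q) • (brkt n (q+2) (Fin.cons a g) * σ n a) := by
      conv_lhs => rw [hL]
      rw [mul_add, Finset.mul_sum]
      have hterm : ∀ i : Fin (q+1),
          σ n a * (((-1:ℚ)^((i:ℕ)+1)) •
              (σ n (g i) * brkt n (q+1) (Fin.cons a (g ∘ i.succAbove))))
            = ((-1:ℚ)^((i:ℕ)+1)) •
                (σσ n a (g i) * brkt n (q+1) (Fin.cons a (g ∘ i.succAbove)))
              - ((-1:ℚ)^q) • (((-1:ℚ)^((i:ℕ)+1)) •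
                  (σ n (g i) * (brkt n (q+1) (Fin.cons a (g ∘ i.succAbove)) * σ n a))) := by
        intro i
        rw [mul_smul_comm, ← mul_assoc, sigma_mul_sigma a (g i), sub_mul, mul_assoc,
          hIH i, mul_smul_comm, smul_sub, smul_comm]
      rw [Finset.sum_congr rfl (fun i _ => hterm i), Finset.sum_sub_distrib]
      have hT : ∑ i : Fin (q+1), ((-1:ℚ)^q) • (((-1:ℚ)^((i:ℕ)+1)) •
            (σ n (g i) * (brkt n (q+1) (Fin.cons a (g ∘ i.succAbove)) * σ n a)))
          = ((-1:ℚ)^q) • (brkt n (q+2) (Fin.cons a g) * σ n a)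
            - ((-1:ℚ)^q) • (σ n a * (brkt n (q+1) g * σ n a)) := by
        rw [← Finset.smul_sum]
        have hstep : ∑ i : Fin (q+1), ((-1:ℚ)^((i:ℕ)+1)) •
              (σ n (g i) * (brkt n (q+1) (Fin.cons a (g ∘ i.succAbove)) * σ n a))
            = (∑ i : Fin (q+1), ((-1:ℚ)^((i:ℕ)+1)) •
                (σ n (g i) * brkt n (q+1) (Fin.cons a (g ∘ i.succAbove)))) * σ n a := by
          rw [Finset.sum_mul]
          refine Finset.sum_congr rfl fun i _ => ?_
          rw [smul_mul_assoc, mul_assoc]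
        rw [hstep]
        have hsum' : ∑ i : Fin (q+1), ((-1:ℚ)^((i:ℕ)+1)) •
              (σ n (g i) * brkt n (q+1) (Fin.cons a (g ∘ i.succAbove)))
            = brkt n (q+2) (Fin.cons a g) - σ n a * brkt n (q+1) g := by
          conv_rhs => rw [hL]
          abel
        rw [hsum', sub_mul, smul_sub, mul_assoc]
      rw [hT]
      abel
    have hpow1 : ∀ i : Fin (q+1), (-1:ℚ)^(q - (i:ℕ)) * (-1:ℚ)^q = (-1:ℚ)^(i:ℕ) := by
      intro i
      have hle : (i:ℕ) ≤ q := Fin.is_le i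
      rw [← pow_add]
      have h2 : q - (i:ℕ) + q = 2*(q - (i:ℕ)) + (i:ℕ) := by omega
      rw [h2, pow_add, pow_mul]
      norm_num
    have hpow2 : ((-1:ℚ)^q) * ((-1:ℚ)^(q+1)) = -1 := by
      rw [← pow_add]
      have h2 : q + (q+1) = 2*q + 1 := by omega
      rw [h2, pow_add, pow_mul]
      norm_num
    have eqII : σ n a * brkt n (q+2) (Fin.cons a g)
        = (∑ i : Fin (q+1), ((-1:ℚ)^(i:ℕ)) •
              (σσ n a (g i) * brkt n (q+1) (Fin.cons a (g ∘ i.succAbove))))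
          - ((-1:ℚ)^q) • (σ n a * (brkt n (q+1) g * σ n a))
          - ((-1:ℚ)^q) • (brkt n (q+2) (Fin.cons a g) * σ n a)
          - brkt n (q+1) g * (σ n a * σ n a) := by
      conv_lhs => rw [hR]
      rw [mul_add, Finset.mul_sum]
      have hfirst : σ n a * (((-1:ℚ)^(q+1)) • (brkt n (q+1) g * σ n a))
          = - (((-1:ℚ)^q) • (σ n a * (brkt n (q+1) g * σ n a))) := by
        rw [mul_smul_comm]
        module
      have hterm : ∀ i : Fin (q+1),
          σ n a * (((-1:ℚ)^(q - (i:ℕ))) •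
              (brkt n (q+1) (Fin.cons a (g ∘ i.succAbove)) * σ n (g i)))
            = ((-1:ℚ)^(i:ℕ)) •
                (σσ n a (g i) * brkt n (q+1) (Fin.cons a (g ∘ i.succAbove)))
              - ((-1:ℚ)^q) • (((-1:ℚ)^(q - (i:ℕ))) •
                  ((brkt n (q+1) (Fin.cons a (g ∘ i.succAbove)) * σ n (g i)) * σ n a)) := by
        intro i
        have hswap : ((-1:ℚ)^(i:ℕ)) •
              ((brkt n (q+1) (Fin.cons a (g ∘ i.succAbove)) * σ n (g i)) * σ n a)
            = ((-1:ℚ)^q) • (((-1:ℚ)^(q - (i:ℕ))) •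
                ((brkt n (q+1) (Fin.cons a (g ∘ i.succAbove)) * σ n (g i)) * σ n a)) := by
          rw [smul_smul, mul_comm ((-1:ℚ)^q), hpow1 i]
        rw [mul_smul_comm, ← mul_assoc, hIH i, smul_mul_assoc, smul_smul, hpow1 i,
          mul_assoc, sigma_mul_sigma a (g i), mul_sub, ← hBK i, smul_sub, ← mul_assoc
            (brkt n (q+1) (Fin.cons a (g ∘ i.succAbove))), hswap]
      rw [Finset.sum_congr rfl (fun i _ => hterm i), Finset.sum_sub_distrib, hfirst]
      have hT2 : ∑ i : Fin (q+1), ((-1:ℚ)^q) • (((-1:ℚ)^(q - (i:ℕ))) •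
            ((brkt n (q+1) (Fin.cons a (g ∘ i.succAbove)) * σ n (g i)) * σ n a))
          = ((-1:ℚ)^q) • (brkt n (q+2) (Fin.cons a g) * σ n a)
            + brkt n (q+1) g * (σ n a * σ n a) := by
        rw [← Finset.smul_sum]
        have hstep : ∑ i : Fin (q+1), ((-1:ℚ)^(q - (i:ℕ))) •
              ((brkt n (q+1) (Fin.cons a (g ∘ i.succAbove)) * σ n (g i)) * σ n a)
            = (∑ i : Fin (q+1), ((-1:ℚ)^(q - (i:ℕ))) •
                (brkt n (q+1) (Fin.cons a (g ∘ i.succAbove)) * σ n (g i))) * σ n a := by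
          rw [Finset.sum_mul]
          exact Finset.sum_congr rfl fun i _ => by rw [smul_mul_assoc]
        rw [hstep]
        have hsum' : ∑ i : Fin (q+1), ((-1:ℚ)^(q - (i:ℕ))) •
              (brkt n (q+1) (Fin.cons a (g ∘ i.succAbove)) * σ n (g i))
            = brkt n (q+2) (Fin.cons a g)
              - ((-1:ℚ)^(q+1)) • (brkt n (q+1) g * σ n a) := by
          conv_rhs => rw [hR]
          abel
        rw [hsum', sub_mul, smul_sub, smul_mul_assoc, smul_smul, hpow2, mul_assoc]
        module
      rw [hT2]
      abel
    have hS : ∑ i : Fin (q+1), ((-1:ℚ)^((i:ℕ)+1)) •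
          (σσ n a (g i) * brkt n (q+1) (Fin.cons a (g ∘ i.succAbove)))
        = - ∑ i : Fin (q+1), ((-1:ℚ)^(i:ℕ)) •
            (σσ n a (g i) * brkt n (q+1) (Fin.cons a (g ∘ i.succAbove))) := by
      rw [← Finset.sum_neg_distrib]
      refine Finset.sum_congr rfl fun i _ => ?_
      module
    have hdouble : σ n a * brkt n (q+2) (Fin.cons a g) + σ n a * brkt n (q+2) (Fin.cons a g)
        = (-(((-1:ℚ)^q) • (brkt n (q+2) (Fin.cons a g) * σ n a)))
          + (-(((-1:ℚ)^q) • (brkt n (q+2) (Fin.cons a g) * σ n a))) := by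
      nth_rewrite 1 [eqI]
      nth_rewrite 1 [eqII]
      rw [hS, hcomm0]
      abel
    have h3 : (2:ℚ) • (σ n a * brkt n (q+2) (Fin.cons a g))
        = (2:ℚ) • (-(((-1:ℚ)^q) • (brkt n (q+2) (Fin.cons a g) * σ n a))) := by
      rw [two_smul, two_smul]; exact hdouble
    have h4 := congrArg (fun z => (2⁻¹:ℚ) • z) h3
    simp only [smul_smul] at h4
    norm_num at h4
    rw [h4]
    module


end OspAux

/-- If `a` occurs among `a₁, …, a_p` but its conjugate `ā` does not, then
`σₐ [a₁…a_p] + (−1)^p [a₁…a_p] σₐ = 0`. -/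
theorem stmt3 (n : ℕ) (hn : 1 ≤ n) (a : Fin (2*n)) (p : ℕ) (f : Fin p → Fin (2*n))
    (hocc : ∃ i, f i = a) (hnocc : ∀ i, f i ≠ conjIdx n a) :
    σ n a * brkt n p f + ((-1 : ℚ)^p) • (brkt n p f * σ n a) = 0 := by
  obtain ⟨i0, hi0⟩ := hocc
  cases p with
  | zero => exact i0.elim0
  | succ q =>
    have hcons : f ∘ (i0.cycleRange.symm : Equiv.Perm (Fin (q+1)))
        = Fin.cons a (f ∘ i0.succAbove) := by
      funext x
      refine Fin.cases ?_ (fun l => ?_) x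
      · simp only [Function.comp_apply, Equiv.Perm.coe_mul]
        rw [show ((i0.cycleRange.symm : Equiv.Perm (Fin (q+1))) : Fin (q+1) → Fin (q+1)) 0
          = i0 from Fin.cycleRange_symm_zero i0]
        rw [hi0, Fin.cons_zero]
      · simp only [Function.comp_apply]
        rw [show ((i0.cycleRange.symm : Equiv.Perm (Fin (q+1))) : Fin (q+1) → Fin (q+1)) l.succ
          = i0.succAbove l from Fin.cycleRange_symm_succ i0 l]
        rw [Fin.cons_succ]
        rfl
    have hsign : (((Equiv.Perm.sign (i0.cycleRange.symm : Equiv.Perm (Fin (q+1))) : ℤ)) : ℚ)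
        = (-1:ℚ)^((i0:ℕ)) := by
      rw [Equiv.Perm.sign_symm, Fin.sign_cycleRange]
      push_cast
      ring
    have hb := OspAux.brkt_comp_perm (q+1) f (i0.cycleRange.symm)
    rw [hcons, hsign] at hb
    have hstar := OspAux.star a q (f ∘ i0.succAbove) (fun l => hnocc _)
    have hcc : ((-1:ℚ)^((i0:ℕ))) * ((-1:ℚ)^((i0:ℕ))) = 1 := by
      rw [← pow_add]
      exact Even.neg_one_pow ⟨(i0:ℕ), rfl⟩
    have h1 : ((-1:ℚ)^((i0:ℕ))) • (σ n a * brkt n (q+1) f)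
        = ((-1:ℚ)^((i0:ℕ))) • (((-1:ℚ)^q) • (brkt n (q+1) f * σ n a)) := by
      calc ((-1:ℚ)^((i0:ℕ))) • (σ n a * brkt n (q+1) f)
          = σ n a * (((-1:ℚ)^((i0:ℕ))) • brkt n (q+1) f) := (mul_smul_comm _ _ _).symm
        _ = σ n a * brkt n (q+1) (Fin.cons a (f ∘ i0.succAbove)) := by rw [← hb]
        _ = ((-1:ℚ)^q) • (brkt n (q+1) (Fin.cons a (f ∘ i0.succAbove)) * σ n a) := hstar
        _ = ((-1:ℚ)^q) • ((((-1:ℚ)^((i0:ℕ))) • brkt n (q+1) f) * σ n a) := by rw [hb]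
        _ = ((-1:ℚ)^q) • (((-1:ℚ)^((i0:ℕ))) • (brkt n (q+1) f * σ n a)) := by
            rw [smul_mul_assoc]
        _ = ((-1:ℚ)^((i0:ℕ))) • (((-1:ℚ)^q) • (brkt n (q+1) f * σ n a)) :=
            smul_comm _ _ _
    have key : σ n a * brkt n (q+1) f = ((-1:ℚ)^q) • (brkt n (q+1) f * σ n a) := by
      calc σ n a * brkt n (q+1) f
          = (((-1:ℚ)^((i0:ℕ))) * ((-1:ℚ)^((i0:ℕ)))) • (σ n a * brkt n (q+1) f) := by
            rw [hcc, one_smul]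
        _ = ((-1:ℚ)^((i0:ℕ))) • (((-1:ℚ)^((i0:ℕ))) • (σ n a * brkt n (q+1) f)) := by
            rw [smul_smul]
        _ = ((-1:ℚ)^((i0:ℕ))) • (((-1:ℚ)^((i0:ℕ))) •
              (((-1:ℚ)^q) • (brkt n (q+1) f * σ n a))) := by rw [h1]
        _ = (((-1:ℚ)^((i0:ℕ))) * ((-1:ℚ)^((i0:ℕ)))) •
              (((-1:ℚ)^q) • (brkt n (q+1) f * σ n a)) := by rw [smul_smul]
        _ = ((-1:ℚ)^q) • (brkt n (q+1) f * σ n a) := by rw [hcc, one_smul]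
    rw [key]
    module


end
end

section
/- In U_1, the element Sc := σ_1 σ_2 − σ_2 σ_1 − 1/2 satisfies σ_1 Sc + Sc σ_1 = 0 and σ_2 Sc + Sc σ_2 = 0. (The Scasimir of U(osp(1|2)).) -/
/-!
Taking `a = b` in the defining relation gives `σ_a² σ_c − σ_c σ_a² = −g_{ac} σ_a`, and
`σ_a [σ_a, σ_c] + [σ_a, σ_c] σ_a = σ_a² σ_c − σ_c σ_a²`. So `σ_a` anticommutes with
`[σ_a, σ_c] + g_{ac}/2`; for `(a, c) = (1, 2)` and `(2, 1)` this is `Sc` and `−Sc`, since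
`g_{12} = −1 = −g_{21}`.
-/

open scoped BigOperators TensorProduct
open Nat

noncomputable section

section Anticommute

variable {A : Type*} [Ring A] [Algebra ℚ A] {x y : A} {k : ℚ}

theorem anticomm_left_of_mul_self_mul (h : x * x * y = y * (x * x) + k • x) :
    x * (x * y - y * x - (k / 2) • 1) + (x * y - y * x - (k / 2) • 1) * x = 0 := by
  calc x * (x * y - y * x - (k / 2) • 1) + (x * y - y * x - (k / 2) • 1) * x
      = x * x * y - y * (x * x) - k • x := by
        simp only [mul_sub, sub_mul, mul_smul_comm, smul_mul_assoc, mul_one, one_mul, mul_assoc]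
        module
    _ = 0 := by rw [h]; abel

theorem anticomm_right_of_mul_self_mul (h : y * y * x = x * (y * y) - k • y) :
    y * (x * y - y * x - (k / 2) • 1) + (x * y - y * x - (k / 2) • 1) * y = 0 := by
  calc y * (x * y - y * x - (k / 2) • 1) + (x * y - y * x - (k / 2) • 1) * y
      = x * (y * y) - y * y * x - k • y := by
        simp only [mul_sub, sub_mul, mul_smul_comm, smul_mul_assoc, mul_one, one_mul, mul_assoc]
        module
    _ = 0 := by rw [h]; abel

end Anticommute

theorem σ_mul_self_mul (n : ℕ) (a c : Fin (2*n)) :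
    σ n a * σ n a * σ n c = σ n c * (σ n a * σ n a) - gmat n a c • σ n a := by
  have rel : (σ n a * σ n a + σ n a * σ n a) * σ n c
      = σ n c * (σ n a * σ n a + σ n a * σ n a)
        - algebraMap ℚ (U n) (gmat n a c) * σ n a - algebraMap ℚ (U n) (gmat n a c) * σ n a := by
    simpa only [σ, map_mul, map_add, map_sub, AlgHom.commutes] using
      RingQuot.mkAlgHom_rel ℚ (OspRel.rel a a c)
  simp only [Algebra.algebraMap_eq_smul_one, smul_mul_assoc, one_mul, add_mul, mul_add] at rel
  linear_combination (norm := module) (1 / 2 : ℚ) • rel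

/-- In `U(osp(1|2))`, the Scasimir `Sc = σ₁σ₂ − σ₂σ₁ − 1/2` anticommutes
with both fermionic generators `σ₁`, `σ₂` (0-indexed: `σ 1 0`, `σ 1 1`). -/
theorem stmt6 :
    ∀ a : Fin (2*1),
      σ 1 a * (σ 1 ⟨0, by omega⟩ * σ 1 ⟨1, by omega⟩ - σ 1 ⟨1, by omega⟩ * σ 1 ⟨0, by omega⟩
          - ((1:ℚ)/2) • 1)
        + (σ 1 ⟨0, by omega⟩ * σ 1 ⟨1, by omega⟩ - σ 1 ⟨1, by omega⟩ * σ 1 ⟨0, by omega⟩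
          - ((1:ℚ)/2) • 1) * σ 1 a = 0 := by
  intro a
  fin_cases a
  · apply anticomm_left_of_mul_self_mul
    rw [σ_mul_self_mul]
    norm_num [gmat]
    module
  · apply anticomm_right_of_mul_self_mul
    rw [σ_mul_self_mul]
    norm_num [gmat]

end
end

section
/- Fix an integer n ≥ 1 and define y_k := (2k+2)! · c_{2k} / (4^k · (2n+1)) for every k ≥ 0. Then y_0 = 2/(2n+1) and, for every k ≥ 1, k · y_k = −Σ_{p=0}^{k−1} y_p · (2k+2)! / ((2p+2)! · (2k−2p+2)!) · ((k−p)(2n−2p+1) + p(2k−2p+2)). -/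
/-! With `θ = X d/dX`, `G = (X h)² = sinh²` and `F = h^{-(2n+1)}`, the series
`F² G^{2n+1} = X^{2(2n+1)}` has logarithmic `θ`-derivative `2(2n+1)`, i.e.
`2 θF · G + (2n+1) F (θG - 2G) = 0`. Since `4 sinh² = e^{2X} + e^{-2X} - 2`, the coefficients
of `G` are `2^{j-1}/j!` at even `j ≥ 2` and vanish otherwise, so the coefficient of `X^{2k+2}`
of this relation is a linear recurrence among the even coefficients of `F`; rescaling them to
`y_k` gives the stated one. -/

open scoped BigOperators
open Nat

noncomputable section

/-- The formal power series `sinh u = Σ u^{2j+1}/(2j+1)!`. -/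
def sinhS : PowerSeries ℚ := PowerSeries.mk fun m => if m % 2 = 1 then (1:ℚ)/(m)! else 0

/-- The formal power series `h = sinh(u)/u = Σ u^{2j}/(2j+1)!` (constant term 1, invertible). -/
def hS : PowerSeries ℚ := PowerSeries.mk fun m => if m % 2 = 0 then (1:ℚ)/(m+1)! else 0

/-- `c_m`, the coefficient of `u^m` in `(u/sinh u)^{2n+1} = (h⁻¹)^{2n+1}`. -/
def ccoef (n m : ℕ) : ℚ := PowerSeries.coeff m ((hS⁻¹)^(2*n+1))

/-- `y_k = (2k+2)! c_{2k} / (4^k (2n+1))`. -/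
def ycoef (n k : ℕ) : ℚ := (((2*k+2))! : ℚ) * ccoef n (2*k) / (4^k * (2*(n:ℚ)+1))

open PowerSeries Finset

theorem Derivation.mul_apply_add_nsmul_of_pow_mul_eq_one {R A : Type*} [CommSemiring R]
    [CommRing A] [Algebra R A] (D : Derivation R A A) {f g : A} {m : ℕ} (h : f ^ m * g = 1) :
    f * D g + m • (D f * g) = 0 := by
  rcases m with _ | m
  · rw [pow_zero, one_mul] at h
    simp [h]
  · have hD := congrArg D h
    rw [Derivation.leibniz, Derivation.leibniz_pow, Derivation.map_one_eq_zero,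
      Nat.add_sub_cancel] at hD
    have hunit : IsUnit (f ^ m) := .of_mul_eq_one (f * g) (by rw [← mul_assoc, ← pow_succ, h])
    refine hunit.mul_right_eq_zero.mp ?_
    simp only [smul_eq_mul, nsmul_eq_mul] at hD ⊢
    linear_combination hD

theorem coeff_X_mul_derivative {R : Type*} [CommRing R] (f : R⟦X⟧) (j : ℕ) :
    coeff j (X * d⁄dX R f) = j * coeff j f := by
  rcases j with _ | j
  · simp
  · rw [coeff_succ_X_mul, coeff_derivative]
    push_cast
    ring

theorem euler_relation_of_pow_mul_eq_one {R : Type*} [CommRing R] {h F : R⟦X⟧} {m : ℕ}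
    (hF : h ^ m * F = 1) :
    X * d⁄dX R F * (C 2 * (X * h) ^ 2) +
      F * (C (m : R) * (X * d⁄dX R ((X * h) ^ 2)) - C (2 * m : R) * (X * h) ^ 2) = 0 := by
  have key := (d⁄dX R).mul_apply_add_nsmul_of_pow_mul_eq_one hF
  have hG : d⁄dX R ((X * h) ^ 2) = 2 * (X * h) * (h + X * d⁄dX R h) := by
    simp [Derivation.leibniz_pow, Derivation.leibniz]
    ring
  rw [hG, map_mul, map_natCast, map_ofNat]
  simp only [nsmul_eq_mul] at key
  linear_combination (2 * X ^ 3 * h) * key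

theorem sum_antidiagonal_coeff_of_pow_mul_eq_one {R : Type*} [CommRing R] {h F : R⟦X⟧} {m : ℕ}
    (hF : h ^ m * F = 1) (N : ℕ) :
    ∑ ij ∈ antidiagonal N, coeff ij.1 F * coeff ij.2 ((X * h) ^ 2) *
      (2 * ij.1 + m * ((ij.2 : R) - 2)) = 0 := by
  have := congrArg (coeff N) (euler_relation_of_pow_mul_eq_one hF)
  rw [map_add, coeff_mul, coeff_mul, ← sum_add_distrib, map_zero] at this
  rw [← this]
  refine sum_congr rfl fun ij _ => ?_
  rw [map_sub, coeff_C_mul, coeff_C_mul, coeff_C_mul, coeff_X_mul_derivative,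
    coeff_X_mul_derivative]
  ring

theorem coeff_rescale_exp (a : ℚ) (j : ℕ) : coeff j (rescale a (exp ℚ)) = a ^ j / j ! := by
  simp [coeff_rescale, coeff_exp, div_eq_mul_inv]

theorem sinhS_eq_rescale_exp :
    sinhS = C (1 / 2 : ℚ) * (rescale 1 (exp ℚ) - rescale (-1) (exp ℚ)) := by
  ext j
  rw [coeff_C_mul, map_sub, coeff_rescale_exp, coeff_rescale_exp, sinhS, coeff_mk]
  rcases Nat.even_or_odd j with hj | hj
  · rw [if_neg (by simpa [Nat.even_iff] using hj), hj.neg_pow]; ring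
  · rw [if_pos (Nat.odd_iff.mp hj), hj.neg_pow]; ring

theorem sinhS_eq_X_mul_hS : sinhS = X * hS := by
  ext (_ | j)
  · simp [sinhS]
  · rw [coeff_succ_X_mul, sinhS, hS, coeff_mk, coeff_mk]
    by_cases h : j % 2 = 0
    · rw [if_pos h, if_pos (by omega)]
    · rw [if_neg h, if_neg (by omega)]

theorem coeff_sinhS_sq (j : ℕ) :
    coeff j (sinhS ^ 2) = ((2 : ℚ) ^ j - 2 * 0 ^ j + (-2) ^ j) / (4 * j !) := by
  have h : sinhS ^ 2 = C (1 / 4 : ℚ) * (rescale 2 (exp ℚ) + rescale (-2) (exp ℚ))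
      - C (1 / 2 : ℚ) * rescale 0 (exp ℚ) := by
    rw [sinhS_eq_rescale_exp, mul_pow, ← map_pow, sub_sq, sq (rescale 1 _), sq (rescale (-1) _),
      mul_assoc, exp_mul_exp_eq_exp_add, exp_mul_exp_eq_exp_add, exp_mul_exp_eq_exp_add,
      ← map_ofNat C 2,
      show (C (1 / 2 : ℚ) : ℚ⟦X⟧) = C (1 / 2 * (1 / 2)) * C 2 by rw [← map_mul]; norm_num]
    norm_num only
    ring
  rw [h, map_sub, coeff_C_mul, coeff_C_mul, map_add, coeff_rescale_exp, coeff_rescale_exp,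
    coeff_rescale_exp]
  ring

theorem coeff_sinhS_sq_eq_zero {j : ℕ} (hj : Odd j ∨ j = 0) : coeff j (sinhS ^ 2) = 0 := by
  rw [coeff_sinhS_sq]
  rcases hj with hj | rfl
  · rw [hj.neg_pow, zero_pow hj.pos.ne']
    ring
  · norm_num

theorem coeff_sinhS_sq_two_mul_add_two (q : ℕ) :
    coeff (2 * q + 2) (sinhS ^ 2) = 2 * 4 ^ q / ((2 * q + 2)! : ℚ) := by
  rw [coeff_sinhS_sq, Even.neg_pow ⟨q + 1, by ring⟩, zero_pow (by omega), pow_add, pow_mul]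
  field_simp
  ring

theorem constantCoeff_hS : constantCoeff hS = 1 := by
  simp [hS, ← coeff_zero_eq_constantCoeff_apply]

theorem ccoef_zero (n : ℕ) : ccoef n 0 = 1 := by
  rw [ccoef, coeff_zero_eq_constantCoeff_apply, map_pow, constantCoeff_inv, constantCoeff_hS]
  norm_num

theorem sum_range_ccoef (n k : ℕ) :
    ∑ p ∈ range (k + 1), ccoef n (2 * p) * (4 ^ (k - p) / (2 * (k - p) + 2)!) *
      (2 * p + (2 * n + 1) * ((k - p : ℕ) : ℚ)) = 0 := by
  have hinv : hS ^ (2 * n + 1) * (hS⁻¹) ^ (2 * n + 1) = 1 := by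
    rw [← mul_pow, PowerSeries.mul_inv_cancel _ (by simp [constantCoeff_hS]), one_pow]
  have hsum := sum_antidiagonal_coeff_of_pow_mul_eq_one hinv (2 * k + 2)
  rw [← sinhS_eq_X_mul_hS] at hsum
  calc _ = 4⁻¹ * ∑ p ∈ range (k + 1), ccoef n (2 * p) *
          coeff (2 * (k - p) + 2) (sinhS ^ 2) *
          (2 * (2 * p : ℕ) + (2 * n + 1 : ℕ) * (((2 * (k - p) + 2 : ℕ) : ℚ) - 2)) := by
        rw [mul_sum]
        refine sum_congr rfl fun p _ => ?_
        rw [coeff_sinhS_sq_two_mul_add_two]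
        push_cast
        ring
    _ = 0 := by
        rw [sum_of_injOn (fun p => (2 * p, 2 * (k - p) + 2)), hsum, mul_zero]
        · intro p _ q _ h
          simp only [Prod.mk.injEq] at h
          omega
        · intro p hp
          simp only [coe_range, Set.mem_Iio] at hp
          simp only [mem_coe, HasAntidiagonal.mem_antidiagonal]
          omega
        · rintro ⟨i, j⟩ hij hne
          rw [HasAntidiagonal.mem_antidiagonal] at hij
          rw [coeff_sinhS_sq_eq_zero, mul_zero, zero_mul]
          rcases Nat.even_or_odd j with ⟨_ | q, hq⟩ | hj
          · exact .inr hq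
          · refine absurd ⟨k - q, ?_, ?_⟩ hne
            · simp only [coe_range, Set.mem_Iio]
              omega
            · simp only [Prod.mk.injEq]
              omega
          · exact .inl hj
        · exact fun _ _ => rfl

theorem sum_range_ycoef (n k : ℕ) :
    ∑ p ∈ range (k + 1),
      ycoef n p * ((2 * k + 2)! / ((2 * p + 2)! * (2 * k - 2 * p + 2)! : ℚ)) *
        ((2 * n + 1) * ((k : ℚ) - p) + 2 * p) = 0 := by
  calc _ = (2 * k + 2)! / (4 ^ k * (2 * n + 1)) *
          ∑ p ∈ range (k + 1), ccoef n (2 * p) * (4 ^ (k - p) / (2 * (k - p) + 2)!) *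
            (2 * p + (2 * n + 1) * ((k - p : ℕ) : ℚ)) := by
        rw [mul_sum]
        refine sum_congr rfl fun p hp => ?_
        obtain ⟨q, rfl⟩ : ∃ q, k = p + q := ⟨k - p, by have := mem_range.mp hp; omega⟩
        rw [show 2 * (p + q) - 2 * p + 2 = 2 * q + 2 by omega, Nat.add_sub_cancel_left, ycoef,
          pow_add]
        field_simp
        push_cast
        ring
    _ = 0 := by rw [sum_range_ccoef, mul_zero]

theorem stmt9_general (n : ℕ) :
    ycoef n 0 = 2/(2*(n:ℚ)+1) ∧
    ∀ k : ℕ, 1 ≤ k → (k:ℚ) * ycoef n k =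
      - ∑ p ∈ Finset.range k, ycoef n p *
          ((((2*k+2))! : ℚ) / ((((2*p+2))! : ℚ) * (((2*k-2*p+2))! : ℚ))) *
          (((k:ℚ)-(p:ℚ)) * (2*(n:ℚ)-2*(p:ℚ)+1) + (p:ℚ) * (2*(k:ℚ)-2*(p:ℚ)+2)) := by
  refine ⟨by simp [ycoef, ccoef_zero, factorial], fun k _ => ?_⟩
  have hrec := sum_range_ycoef n k
  rw [sum_range_succ, Nat.sub_self, zero_add, factorial_two] at hrec
  rw [eq_neg_iff_add_eq_zero, ← hrec, add_comm]
  congr 1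
  · exact sum_congr rfl fun p _ => by ring
  · field_simp
    ring

/-- `y₀ = 2/(2n+1)` and for `k ≥ 1`,
`k y_k = −Σ_{p=0}^{k−1} y_p (2k+2)!/((2p+2)!(2k−2p+2)!) ((k−p)(2n−2p+1) + p(2k−2p+2))`. -/
theorem stmt9 (n : ℕ) (hn : 1 ≤ n) :
    ycoef n 0 = 2/(2*(n:ℚ)+1) ∧
    ∀ k : ℕ, 1 ≤ k → (k:ℚ) * ycoef n k =
      - ∑ p ∈ Finset.range k, ycoef n p *
          ((((2*k+2))! : ℚ) / ((((2*p+2))! : ℚ) * (((2*k-2*p+2))! : ℚ))) *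
          (((k:ℚ)-(p:ℚ)) * (2*(n:ℚ)-2*(p:ℚ)+1) + (p:ℚ) * (2*(k:ℚ)-2*(p:ℚ)+2)) :=
  stmt9_general n

end
end

section
/- For every index 1 ≤ a ≤ 2n and every tuple (a_1, …, a_p) of indices in {1, …, 2n}, the product σ_a · [a_1 … a_p] lies in Ω + Σ_{1 ≤ b, c ≤ 2n} σ_{bc} Ω, i.e. in the ℚ-linear span of elements ω and σ_{bc} ω′ with ω, ω′ ∈ Ω and σ_{bc} := σ_b σ_c + σ_c σ_b. (That is, σ_a Ω ⊆ U_1 ⊗ Ω in the filtration by degree in the bosonic generators.) -/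
open scoped BigOperators TensorProduct
open Nat

noncomputable section

/-!
Write `J_k(u)` for the antisymmetrized product `[a₁ … a_p]` with `u` inserted in slot `k`
(`altInsert`). Moving `σ_x` one slot to the right turns `J_k(σ_x)` into `-J_k(σ_x)` up to the
insertions `J_k(σ_{x a_j})` of the anticommutators into `[a₁ … â_j … a_p]`. A bosonic insertion
can be moved to the front, where it lies in `σ_{bc} Ω`, at the cost of commutators
`[σ_d, σ_{bc}] ∈ span σ`, i.e. of fermionic insertions into shorter products, which are handled by
induction on `p`. Hence `J_k(σ_x) ≡ (-1)^k σ_x [a₁ … a_p]` modulo `Ω + Σ σ_{bc} Ω`, and expanding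
`[x a₁ … a_p] = Σ_k (-1)^k J_k(σ_x)` along the position of `x` shows that
`(p + 1) σ_x [a₁ … a_p]` lies in `Ω + Σ σ_{bc} Ω`. The relations of `osp(1|2n)` enter only
through `[σ_d, σ_{bc}] ∈ span σ`.
-/

open Equiv Equiv.Perm Finset

section PermFinSucc

variable {q : ℕ}

def succPerm (t : Perm (Fin q)) : Perm (Fin (q + 1)) := decomposeFin.symm (0, t)

@[simp] lemma succPerm_zero (t : Perm (Fin q)) : succPerm t 0 = 0 :=
  decomposeFin_symm_apply_zero 0 t

@[simp] lemma succPerm_succ (t : Perm (Fin q)) (i : Fin q) :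
    succPerm t i.succ = (t i).succ := by
  simp [succPerm]

@[simp] lemma sign_succPerm (t : Perm (Fin q)) : sign (succPerm t) = sign t := by
  simp [succPerm]

lemma succPerm_injective : Function.Injective (succPerm (q := q)) := fun _ _ h => by
  simpa using decomposeFin.symm.injective h

lemma succPerm_inv (t : Perm (Fin q)) : succPerm t⁻¹ = (succPerm t)⁻¹ :=
  eq_inv_of_mul_eq_one_left <| by ext i; cases i using Fin.cases <;> simp

lemma cons_comp_succPerm {α : Type*} (a : α) (x : Fin q → α) (t : Perm (Fin q)) :
    Fin.cons a x ∘ succPerm t = Fin.cons a (x ∘ t) := by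
  ext i; cases i using Fin.cases <;> simp

lemma bijective_cycleRange_inv_mul_succPerm :
    Function.Bijective fun jt : Fin (q + 1) × Perm (Fin q) =>
      (Fin.cycleRange jt.1)⁻¹ * succPerm jt.2 := by
  refine (Fintype.bijective_iff_injective_and_card _).2 ⟨?_, ?_⟩
  · rintro ⟨j, t⟩ ⟨j', t'⟩ h
    have hj : j = j' := by simpa using congrArg (· 0) h
    subst hj
    simpa using succPerm_injective (mul_left_cancel h)
  · simp [Fintype.card_perm, Nat.factorial_succ]

lemma sum_perm_fin_succ {M : Type*} [AddCommMonoid M] (F : Perm (Fin (q + 1)) → M) :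
    ∑ u, F u = ∑ j, ∑ t, F ((Fin.cycleRange j)⁻¹ * succPerm t) := by
  rw [← Fintype.sum_prod_type']
  exact (Fintype.sum_bijective _ bijective_cycleRange_inv_mul_succPerm _ _ fun _ => rfl).symm

variable {α M : Type*} [AddCommGroup M]

lemma sum_sign_smul_comp_eq_sum_insertNth (k : Fin (q + 1)) (v : Fin (q + 1) → α)
    (Φ : (Fin (q + 1) → α) → M) :
    ∑ u : Perm (Fin (q + 1)), (sign u : ℤ) • Φ (v ∘ u)
      = ∑ j : Fin (q + 1), ∑ t : Perm (Fin q), ((-1) ^ ((k : ℕ) + j) * sign t : ℤ) •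
          Φ (k.insertNth (v j) (j.removeNth v ∘ t)) := by
  rw [← Equiv.sum_comp (Equiv.mulRight (Fin.cycleRange k)), sum_perm_fin_succ]
  refine sum_congr rfl fun j _ => sum_congr rfl fun t _ => ?_
  have hv : v ∘ ⇑(Fin.cycleRange j)⁻¹ = Fin.cons (v j) (j.removeNth v) :=
    (Fin.cons_removeNth_eq_comp_cycleRange_symm v j).symm
  simp only [coe_mulRight, coe_mul, ← Function.comp_assoc, hv, cons_comp_succPerm,
    Fin.cons_comp_cycleRange, Perm.sign_mul, sign_inv, sign_succPerm, Fin.sign_cycleRange]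
  push_cast
  congr 1
  ring

lemma sum_sign_smul_cons_comp_eq_sum_insertNth (x : α) (w : Fin q → α)
    (Φ : (Fin (q + 1) → α) → M) :
    ∑ u : Perm (Fin (q + 1)), (sign u : ℤ) • Φ (Fin.cons x w ∘ u)
      = ∑ j : Fin (q + 1), ∑ t : Perm (Fin q), ((-1) ^ (j : ℕ) * sign t : ℤ) •
          Φ (j.insertNth x (w ∘ t)) := by
  rw [← Equiv.sum_comp (Equiv.inv _), sum_perm_fin_succ]
  refine sum_congr rfl fun j _ => ?_
  rw [← Equiv.sum_comp (Equiv.inv _)]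
  refine sum_congr rfl fun t _ => ?_
  simp only [Equiv.inv_apply, mul_inv_rev, inv_inv, ← succPerm_inv, coe_mul,
    ← Function.comp_assoc, cons_comp_succPerm, Fin.cons_comp_cycleRange, Perm.sign_mul,
    sign_succPerm, Fin.sign_cycleRange]
  push_cast
  congr 1
  ring

end PermFinSucc

section InsertNth

variable {M : Type*} [Monoid M]

lemma prod_ofFn_insertNth_succ_insertNth {q : ℕ} (k : Fin (q + 1)) (y u : M) (w : Fin q → M) :
    (List.ofFn (k.succ.insertNth u (k.insertNth y w))).prod
      = (List.ofFn (k.insertNth (y * u) w)).prod := by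
  induction q with
  | zero =>
    obtain rfl : k = 0 := Fin.fin_one_eq_zero k
    simp only [Fin.insertNth_zero', Fin.insertNth_succ_cons, List.ofFn_cons, List.prod_cons,
      mul_assoc]
  | succ q ih =>
    induction k using Fin.cases with
    | zero =>
      simp only [Fin.insertNth_zero', Fin.insertNth_succ_cons, List.ofFn_cons, List.prod_cons,
        mul_assoc]
    | succ k =>
      rw [← Fin.cons_self_tail w]
      simp only [Fin.insertNth_succ_cons, List.ofFn_cons, List.prod_cons, ih]

lemma prod_ofFn_insertNth_castSucc_insertNth {q : ℕ} (k : Fin (q + 1)) (y u : M)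
    (w : Fin q → M) :
    (List.ofFn (k.castSucc.insertNth u (k.insertNth y w))).prod
      = (List.ofFn (k.insertNth (u * y) w)).prod := by
  induction q with
  | zero =>
    obtain rfl : k = 0 := Fin.fin_one_eq_zero k
    simp only [Fin.castSucc_zero, Fin.insertNth_zero', List.ofFn_cons, List.prod_cons, mul_assoc]
  | succ q ih =>
    induction k using Fin.cases with
    | zero =>
      simp only [Fin.castSucc_zero, Fin.insertNth_zero', List.ofFn_cons, List.prod_cons, mul_assoc]
    | succ k =>
      rw [← Fin.cons_self_tail w, ← Fin.succ_castSucc]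
      simp only [Fin.insertNth_succ_cons, List.ofFn_cons, List.prod_cons, ih]

end InsertNth

section Antisymmetrization

variable {A : Type*} [Ring A] {p : ℕ}

def altProd (v : Fin p → A) : A :=
  ∑ s : Perm (Fin p), (sign s : ℤ) • (List.ofFn (v ∘ s)).prod

variable (K : Type*) [CommRing K] [Algebra K A]

-- `altInsert K k v u = Σ_t sign t • v_{t 0} ⋯ u ⋯ v_{t (p-1)}` with `u` in slot `k`
-- (`altInsert_apply`); building it from `mkPiAlgebraFin` makes it linear in `u`.
def altInsert (k : Fin (p + 1)) (v : Fin p → A) : A →ₗ[K] A :=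
  ∑ t : Perm (Fin p), (sign t : ℤ) •
    (MultilinearMap.mkPiAlgebraFin K (p + 1) A).toLinearMap (k.insertNth 0 (v ∘ t)) k

variable {K}

lemma altInsert_apply (k : Fin (p + 1)) (v : Fin p → A) (u : A) :
    altInsert K k v u
      = ∑ t : Perm (Fin p), (sign t : ℤ) • (List.ofFn (k.insertNth u (v ∘ t))).prod := by
  simp [altInsert, Fin.update_insertNth]

lemma altInsert_zero (v : Fin p → A) (u : A) : altInsert K 0 v u = u * altProd v := by
  simp only [altInsert_apply, altProd, Fin.insertNth_zero', List.ofFn_cons, List.prod_cons,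
    Finset.mul_sum, mul_smul_comm]

lemma altProd_cons (x : A) (v : Fin p → A) :
    altProd (Fin.cons x v) = ∑ j : Fin (p + 1), ((-1) ^ (j : ℕ) : ℤ) • altInsert K j v x := by
  rw [altProd, sum_sign_smul_cons_comp_eq_sum_insertNth x v fun w => (List.ofFn w).prod]
  simp only [altInsert_apply, Finset.smul_sum, mul_smul]

lemma altInsert_succ {q : ℕ} (k : Fin (q + 1)) (v : Fin (q + 1) → A) (u : A) :
    altInsert K k.succ v u
      = ∑ j : Fin (q + 1), ((-1) ^ ((k : ℕ) + j) : ℤ) •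
          altInsert K k (j.removeNth v) (v j * u) := by
  rw [altInsert_apply,
    sum_sign_smul_comp_eq_sum_insertNth k v fun w => (List.ofFn (k.succ.insertNth u w)).prod]
  simp only [altInsert_apply, Finset.smul_sum, mul_smul, prod_ofFn_insertNth_succ_insertNth]

lemma altInsert_castSucc {q : ℕ} (k : Fin (q + 1)) (v : Fin (q + 1) → A) (u : A) :
    altInsert K k.castSucc v u
      = ∑ j : Fin (q + 1), ((-1) ^ ((k : ℕ) + j) : ℤ) •
          altInsert K k (j.removeNth v) (u * v j) := by
  rw [altInsert_apply,
    sum_sign_smul_comp_eq_sum_insertNth k v fun w => (List.ofFn (k.castSucc.insertNth u w)).prod]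
  simp only [altInsert_apply, Finset.smul_sum, mul_smul, prod_ofFn_insertNth_castSucc_insertNth]

lemma altInsert_succ_add_castSucc {q : ℕ} (k : Fin (q + 1)) (v : Fin (q + 1) → A) (u : A) :
    altInsert K k.succ v u + altInsert K k.castSucc v u
      = ∑ j : Fin (q + 1), ((-1) ^ ((k : ℕ) + j) : ℤ) •
          altInsert K k (j.removeNth v) (v j * u + u * v j) := by
  simp only [altInsert_succ, altInsert_castSucc, map_add, smul_add, Finset.sum_add_distrib]

lemma altInsert_succ_eq_castSucc_add {q : ℕ} (k : Fin (q + 1)) (v : Fin (q + 1) → A) (u : A) :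
    altInsert K k.succ v u
      = altInsert K k.castSucc v u + ∑ j : Fin (q + 1), ((-1) ^ ((k : ℕ) + j) : ℤ) •
          altInsert K k (j.removeNth v) ⁅v j, u⁆ := by
  simp only [altInsert_succ, altInsert_castSucc, Ring.lie_def, map_sub, smul_sub,
    Finset.sum_sub_distrib, add_sub_cancel]

end Antisymmetrization

section Filtration

variable (K : Type*) {A ι : Type*} [CommRing K] [Ring A] [Algebra K A] (σ : ι → A)

-- `Ω` and `Ω + Σ_{b,c} σ_{bc} Ω`, for an arbitrary family `σ`.
def altSpan : Submodule K A :=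
  Submodule.span K {x | ∃ p, ∃ f : Fin p → ι, x = altProd (σ ∘ f)}

def altSpanDegOne : Submodule K A :=
  altSpan K σ ⊔
    Submodule.span K {x | ∃ b c, ∃ w ∈ altSpan K σ, x = (σ b * σ c + σ c * σ b) * w}

variable {K σ}

lemma altProd_mem_altSpanDegOne {p : ℕ} (f : Fin p → ι) :
    altProd (σ ∘ f) ∈ altSpanDegOne K σ :=
  Submodule.mem_sup_left (Submodule.subset_span ⟨p, f, rfl⟩)

lemma anticomm_mul_altProd_mem_altSpanDegOne (b c : ι) {p : ℕ} (f : Fin p → ι) :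
    (σ b * σ c + σ c * σ b) * altProd (σ ∘ f) ∈ altSpanDegOne K σ :=
  Submodule.mem_sup_right
    (Submodule.subset_span ⟨b, c, _, Submodule.subset_span ⟨p, f, rfl⟩, rfl⟩)

lemma altInsert_anticomm_mem
    (hσ : ∀ b c d, ⁅σ d, σ b * σ c + σ c * σ b⁆ ∈ Submodule.span K (Set.range σ)) {q : ℕ}
    (ih : ∀ q' < q, ∀ x (g : Fin q' → ι) k,
      altInsert K k (σ ∘ g) (σ x) ∈ altSpanDegOne K σ)
    (b c : ι) (g : Fin q → ι) (k : Fin (q + 1)) :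
    altInsert K k (σ ∘ g) (σ b * σ c + σ c * σ b) ∈ altSpanDegOne K σ := by
  induction k using Fin.induction with
  | zero => rw [altInsert_zero]; exact anticomm_mul_altProd_mem_altSpanDegOne b c g
  | succ k hk =>
    cases q with
    | zero => exact k.elim0
    | succ q =>
      rw [altInsert_succ_eq_castSucc_add]
      refine add_mem hk (sum_mem fun j _ => zsmul_mem ?_ _)
      have hmap : (Submodule.span K (Set.range σ)).map (altInsert K k (σ ∘ j.removeNth g))
          ≤ altSpanDegOne K σ :=
        (Submodule.map_span_le _ _ _).2 <| by
          rintro _ ⟨x, rfl⟩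
          exact ih q q.lt_succ_self x _ k
      exact hmap (Submodule.mem_map_of_mem (hσ _ _ _))

lemma altInsert_smodEq
    (hσ : ∀ b c d, ⁅σ d, σ b * σ c + σ c * σ b⁆ ∈ Submodule.span K (Set.range σ)) {p : ℕ}
    (ih : ∀ q < p, ∀ x (g : Fin q → ι) k,
      altInsert K k (σ ∘ g) (σ x) ∈ altSpanDegOne K σ)
    (x : ι) (f : Fin p → ι) (k : Fin (p + 1)) :
    altInsert K k (σ ∘ f) (σ x)
      ≡ ((-1) ^ (k : ℕ) : ℤ) • (σ x * altProd (σ ∘ f)) [SMOD altSpanDegOne K σ] := by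
  induction k using Fin.induction with
  | zero => rw [altInsert_zero, Fin.val_zero, pow_zero, one_smul]
  | succ k hk =>
    cases p with
    | zero => exact k.elim0
    | succ q =>
      have hsum : altInsert K k.succ (σ ∘ f) (σ x) + altInsert K k.castSucc (σ ∘ f) (σ x)
          ∈ altSpanDegOne K σ := by
        rw [altInsert_succ_add_castSucc]
        exact sum_mem fun j _ => zsmul_mem (altInsert_anticomm_mem hσ
          (fun q' hq' => ih q' (Nat.lt_succ_of_lt hq')) (f j) x (j.removeNth f) k) _
      rw [SModEq.sub_mem] at hk ⊢
      convert sub_mem hsum hk using 1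
      rw [Fin.val_succ, Fin.val_castSucc, pow_succ, mul_neg_one, neg_smul]
      abel

end Filtration

section CharZero

variable {K A ι : Type*} [Field K] [CharZero K] [Ring A] [Algebra K A] {σ : ι → A}

theorem altInsert_mem_altSpanDegOne
    (hσ : ∀ b c d, ⁅σ d, σ b * σ c + σ c * σ b⁆ ∈ Submodule.span K (Set.range σ)) (p : ℕ) :
    ∀ x (f : Fin p → ι) k, altInsert K k (σ ∘ f) (σ x) ∈ altSpanDegOne K σ := by
  induction p using Nat.strong_induction_on with
  | _ p ih =>
  intro x f k
  have hcons : altProd (σ ∘ Fin.cons x f)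
      ≡ (p + 1) • (σ x * altProd (σ ∘ f)) [SMOD altSpanDegOne K σ] := by
    rw [Fin.comp_cons, altProd_cons (K := K)]
    refine (SModEq.sum fun j _ => (altInsert_smodEq hσ ih x f j).zsmul _).trans ?_
    simp only [smul_smul, ← mul_pow, neg_one_mul, neg_neg, one_pow, one_smul, sum_const,
      Finset.card_univ, Fintype.card_fin, SModEq.rfl]
  have hmul : σ x * altProd (σ ∘ f) ∈ altSpanDegOne K σ := by
    have h := (SModEq.zero.2 (altProd_mem_altSpanDegOne (Fin.cons x f))).symm.trans hcons
    rwa [SModEq.comm, SModEq.zero, ← Nat.cast_smul_eq_nsmul K,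
      Submodule.smul_mem_iff _ (Nat.cast_ne_zero.2 p.succ_ne_zero)] at h
  have hk := SModEq.sub_mem.1 (altInsert_smodEq hσ ih x f k)
  simpa only [sub_add_cancel] using add_mem hk (zsmul_mem hmul ((-1) ^ (k : ℕ)))

theorem mul_altProd_mem_altSpanDegOne
    (hσ : ∀ b c d, ⁅σ d, σ b * σ c + σ c * σ b⁆ ∈ Submodule.span K (Set.range σ))
    (a : ι) {p : ℕ} (f : Fin p → ι) : σ a * altProd (σ ∘ f) ∈ altSpanDegOne K σ := by
  simpa only [altInsert_zero] using altInsert_mem_altSpanDegOne hσ p a f 0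

end CharZero

lemma σσ_mul_σ {n : ℕ} (b c d : Fin (2 * n)) :
    σσ n b c * σ n d = σ n d * σσ n b c - gmat n b d • σ n c - gmat n c d • σ n b := by
  have h := RingQuot.mkAlgHom_rel ℚ (OspRel.rel b c d)
  simp only [map_mul, map_add, map_sub, AlgHom.commutes] at h
  simpa [σσ, σ, Algebra.smul_def] using h

lemma lie_σ_σσ_mem_span {n : ℕ} (b c d : Fin (2 * n)) :
    ⁅σ n d, σ n b * σ n c + σ n c * σ n b⁆ ∈ Submodule.span ℚ (Set.range (σ n)) := by
  have h : ⁅σ n d, σσ n b c⁆ = gmat n b d • σ n c + gmat n c d • σ n b := by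
    rw [Ring.lie_def, σσ_mul_σ]; abel
  rw [← σσ, h]
  exact add_mem (Submodule.smul_mem _ _ (Submodule.subset_span ⟨c, rfl⟩))
    (Submodule.smul_mem _ _ (Submodule.subset_span ⟨b, rfl⟩))

theorem stmt19_general (n : ℕ) (a : Fin (2*n)) (p : ℕ) (f : Fin p → Fin (2*n)) :
    σ n a * brkt n p f ∈
      Omega n ⊔ Submodule.span ℚ {x | ∃ b c, ∃ w ∈ Omega n, x = σσ n b c * w} :=
  mul_altProd_mem_altSpanDegOne lie_σ_σσ_mem_span a f

/-- For every fermionic generator `σₐ` and every antisymmetrized monomial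
`[a₁ … a_p]`, the product `σₐ·[a₁ … a_p]` lies in `Ω + Σ_{b,c} σ_{bc} Ω`, i.e. in the span of
the elements `ω` and `σ_{bc} ω′` with `ω, ω′ ∈ Ω`:  `σₐ Ω ⊆ U₁ ⊗ Ω` in the filtration by
degree in the bosonic generators. -/
theorem stmt19 (n : ℕ) (hn : 1 ≤ n) (a : Fin (2*n)) (p : ℕ) (f : Fin p → Fin (2*n)) :
    σ n a * brkt n p f ∈
      Omega n ⊔ Submodule.span ℚ {x | ∃ b c, ∃ w ∈ Omega n, x = σσ n b c * w} :=
  stmt19_general n a p f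

end
end
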